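/- arXiv:2405.13447 — 4 statements merged into one kernel-verified Lean document; each statement's English description precedes it below -/
import Mathlib

section
/- Let f be an NNS multilinear binary polynomial on {0,1}^n, and let N_f := { j : the coefficient of x_j in f is ≤ 0 }. Then any minimizer of f over the set of binary vectors with x_j = 1 for all j ∈ N_f is also a global minimizer of f over {0,1}^n. Equivalently, there exists a global minimizer x* of f over {0,1}^n with x*_j = 1 for all j ∈ N_f. -/
/-- Evaluation of a multilinear binary polynomial with coefficient vector `c`
(indexed by subsets of `Fin n`) at the binary point corresponding to `S`. -/
def evalPoly {n : ℕ} (c : Finset (Fin n) → ℝ) (S : Finset (Fin n)) : ℝ :=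
  ∑ A : Finset (Fin n), if A ⊆ S then c A else 0

lemma evalPoly_union_le {n : ℕ} (c : Finset (Fin n) → ℝ)
    (hNNS : ∀ A : Finset (Fin n), 2 ≤ A.card → c A ≤ 0) (T : Finset (Fin n)) :
    evalPoly c (T ∪ Finset.univ.filter (fun j => c {j} ≤ 0)) ≤ evalPoly c T := by
  apply Finset.sum_le_sum
  intro A _
  by_cases hT : A ⊆ T
  · simp [hT, Finset.Subset.trans hT Finset.subset_union_left]
  · simp only [hT, if_false]
    by_cases hU : A ⊆ T ∪ Finset.univ.filter (fun j => c {j} ≤ 0)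
    · simp only [hU, if_true]
      rcases Nat.lt_or_ge A.card 2 with h2 | h2
      · interval_cases h : A.card
        · exact absurd (Finset.card_eq_zero.mp h ▸ Finset.empty_subset T) hT
        · obtain ⟨j, hj⟩ := Finset.card_eq_one.mp h
          subst hj
          rcases Finset.mem_union.mp (hU (Finset.mem_singleton_self j)) with h | h
          · exact absurd (Finset.singleton_subset_iff.mpr h) hT
          · exact (Finset.mem_filter.mp h).2
      · exact hNNS A h2
    · simp [hU]

/-- For an NNS polynomial `f`, with `N_f = {j : coefficient of x_j ≤ 0}`:
any minimizer of `f` over the points with `x_j = 1` for `j ∈ N_f` is a global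
minimizer, and in particular there is a global minimizer fixing those entries
to one. -/
theorem nns_minimizer_fixed_ones {n : ℕ} (c : Finset (Fin n) → ℝ)
    (hNNS : ∀ A : Finset (Fin n), 2 ≤ A.card → c A ≤ 0) :
    (∀ S : Finset (Fin n),
      (∀ j : Fin n, c {j} ≤ 0 → j ∈ S) →
      (∀ T : Finset (Fin n), (∀ j : Fin n, c {j} ≤ 0 → j ∈ T) →
        evalPoly c S ≤ evalPoly c T) →
      ∀ T : Finset (Fin n), evalPoly c S ≤ evalPoly c T) ∧
    (∃ S : Finset (Fin n), (∀ j : Fin n, c {j} ≤ 0 → j ∈ S) ∧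
      ∀ T : Finset (Fin n), evalPoly c S ≤ evalPoly c T) := by
  have key : ∀ S : Finset (Fin n),
      (∀ j : Fin n, c {j} ≤ 0 → j ∈ S) →
      (∀ T : Finset (Fin n), (∀ j : Fin n, c {j} ≤ 0 → j ∈ T) →
        evalPoly c S ≤ evalPoly c T) →
      ∀ T : Finset (Fin n), evalPoly c S ≤ evalPoly c T := by
    intro S hS hmin T
    refine le_trans (hmin _ ?_) (evalPoly_union_le c hNNS T)
    intro j hj
    exact Finset.mem_union_right _ (Finset.mem_filter.mpr ⟨Finset.mem_univ j, hj⟩)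
  refine ⟨key, ?_⟩
  obtain ⟨S, hSmem, hSmin⟩ := Finset.exists_min_image
    (Finset.univ.filter (fun S : Finset (Fin n) =>
      ∀ j : Fin n, c {j} ≤ 0 → j ∈ S)) (evalPoly c)
    ⟨Finset.univ, Finset.mem_filter.mpr ⟨Finset.mem_univ _, fun j _ => Finset.mem_univ j⟩⟩
  have hS := (Finset.mem_filter.mp hSmem).2
  refine ⟨S, hS, key S hS ?_⟩
  intro T hT
  exact hSmin T (Finset.mem_filter.mpr ⟨Finset.mem_univ _, hT⟩)
end

section
/- Let f be an NNS multilinear polynomial with nonlinear support A and let G^c be the associated flow network with nodes {s, t} ∪ A ∪ [n], source-side edges (s, α) of capacity −f_α for α ∈ A, infinite-capacity edges (α, j) for j in the support of α, and sink-side edges (j, t) of capacity max(f_j, 0). Then the map ζ sending x ∈ {0,1}^n to the cut label u with u_j = x_j for j ∈ [n], u_α = x^α for α ∈ A, u_s = 1, u_t = 0, is a bijection from B_f to U_f, and for every x ∈ B_f the cut capacity C^c(ζ(x)) equals f^c(x). Consequently min over B_f of f^c equals min over U_f of C^c. -/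
/-- The min-cut correspondence for minimizing an NNS polynomial:
the map `ζ` is a bijection from the restricted cube `B_f` onto the set `U_f`
of admissible cut labels, the cut capacity of `ζ(x)` equals `f^c(x)` on `B_f`,
and the two minima coincide. -/
theorem mincut_correspondence {n : ℕ} (A : Finset (Finset (Fin n)))
    (hA : ∀ α ∈ A, 2 ≤ α.card)
    (cA : Finset (Fin n) → ℝ) (hcA : ∀ α ∈ A, cA α ≤ 0)
    (l : Fin n → ℝ) (bM : ℝ) :
    let xval : Finset (Fin n) → Finset (Fin n) → ℝ :=
      fun α S => if α ⊆ S then 1 else 0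
    let fc : Finset (Fin n) → ℝ := fun S =>
      ∑ α ∈ A, (-cA α) * (1 - xval α S) + ∑ j : Fin n, max (l j) 0 * xval {j} S
    let Bf : Set (Finset (Fin n)) := {S | ∀ j : Fin n, l j ≤ 0 → j ∈ S}
    let Ccut : (({α // α ∈ A} ⊕ Fin n) → Bool) → ℝ := fun u =>
      (∑ α ∈ A.attach, if u (Sum.inl α) = false then -cA α.1 else 0)
      + (∑ α ∈ A.attach, ∑ j ∈ α.1,
          if u (Sum.inl α) = true ∧ u (Sum.inr j) = false then bM else 0)
      + (∑ j : Fin n, if u (Sum.inr j) = true then max (l j) 0 else 0)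
    let Uf : Set (({α // α ∈ A} ⊕ Fin n) → Bool) :=
      {u | (∀ j : Fin n, l j ≤ 0 → u (Sum.inr j) = true) ∧
        ∀ α : {α // α ∈ A},
          (u (Sum.inl α) = true ↔ ∀ j ∈ α.1, u (Sum.inr j) = true)}
    let ζ : Finset (Fin n) → (({α // α ∈ A} ⊕ Fin n) → Bool) := fun S v =>
      match v with
      | Sum.inl α => decide (α.1 ⊆ S)
      | Sum.inr j => decide (j ∈ S)
    Set.BijOn ζ Bf Uf ∧
    (∀ S ∈ Bf, fc S = Ccut (ζ S)) ∧
    sInf (fc '' Bf) = sInf (Ccut '' Uf) := by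
  intro xval fc Bf Ccut Uf ζ
  have hmaps : Set.MapsTo ζ Bf Uf := by
    intro S hS
    refine ⟨fun j hj => by simpa [ζ] using hS j hj, fun α => ?_⟩
    simp [ζ, Finset.subset_iff]
  have hbij : Set.BijOn ζ Bf Uf := by
    refine ⟨hmaps, ?_, ?_⟩
    · intro S hS T hT h
      ext j
      have := congrFun h (Sum.inr j)
      simpa [ζ] using this
    · intro u hu
      refine ⟨Finset.univ.filter (fun j => u (Sum.inr j) = true), ?_, ?_⟩
      · intro j hj
        simp [hu.1 j hj]
      · funext v
        match v with
        | Sum.inl α =>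
          simp only [ζ]
          rcases Bool.eq_false_or_eq_true (u (Sum.inl α)) with h | h
          · rw [h]
            have := (hu.2 α).mp h
            rw [decide_eq_true_eq, Finset.subset_iff]
            intro j hj
            simp [this j hj]
          · rw [h]
            rw [decide_eq_false_iff_not, Finset.subset_iff]
            intro hsub
            have : u (Sum.inl α) = true := (hu.2 α).mpr (fun j hj => by
              have := hsub hj; simpa using this)
            rw [this] at h; exact absurd h (by simp)
        | Sum.inr j => simp [ζ]
  refine ⟨hbij, ?_, ?_⟩
  · intro S hS
    have hval : ∀ S, fc S = Ccut (ζ S) := by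
      intro S
      simp only [fc, Ccut, ζ, xval]
      have h1 : ∑ α ∈ A, (-cA α) * (1 - if α ⊆ S then (1:ℝ) else 0)
          = ∑ α ∈ A.attach, if (decide (α.1 ⊆ S) : Bool) = false then -cA α.1 else 0 := by
        rw [Finset.sum_attach A (fun α => if (decide (α ⊆ S) : Bool) = false then -cA α else 0)]
        apply Finset.sum_congr rfl
        intro α _
        by_cases h : α ⊆ S <;> simp [h]
      have h2 : (∑ α ∈ A.attach, ∑ j ∈ α.1,
          if (decide (α.1 ⊆ S) : Bool) = true ∧ (decide (j ∈ S) : Bool) = false then bM else 0) = 0 := by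
        apply Finset.sum_eq_zero
        intro α _
        apply Finset.sum_eq_zero
        intro j hj
        by_cases h : α.1 ⊆ S
        · simp [h, h hj]
        · simp [h]
      have h3 : ∑ j : Fin n, max (l j) 0 * (if {j} ⊆ S then (1:ℝ) else 0)
          = ∑ j : Fin n, if (decide (j ∈ S) : Bool) = true then max (l j) 0 else 0 := by
        apply Finset.sum_congr rfl
        intro j _
        by_cases h : j ∈ S <;> simp [h, Finset.singleton_subset_iff]
      rw [h1, h2, h3]; ring
    exact hval S
  · have himg : Ccut '' Uf = fc '' Bf := by
      rw [← hbij.image_eq, ← Set.image_comp]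
      apply Set.image_congr
      intro S hS
      symm
      simp only [Function.comp]
      -- fc S = Ccut (ζ S)
      simp only [fc, Ccut, ζ, xval]
      have h1 : ∑ α ∈ A, (-cA α) * (1 - if α ⊆ S then (1:ℝ) else 0)
          = ∑ α ∈ A.attach, if (decide (α.1 ⊆ S) : Bool) = false then -cA α.1 else 0 := by
        rw [Finset.sum_attach A (fun α => if (decide (α ⊆ S) : Bool) = false then -cA α else 0)]
        apply Finset.sum_congr rfl
        intro α _
        by_cases h : α ⊆ S <;> simp [h]
      have h2 : (∑ α ∈ A.attach, ∑ j ∈ α.1,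
          if (decide (α.1 ⊆ S) : Bool) = true ∧ (decide (j ∈ S) : Bool) = false then bM else 0) = 0 := by
        apply Finset.sum_eq_zero
        intro α _
        apply Finset.sum_eq_zero
        intro j hj
        by_cases h : α.1 ⊆ S
        · simp [h, h hj]
        · simp [h]
      have h3 : ∑ j : Fin n, max (l j) 0 * (if {j} ⊆ S then (1:ℝ) else 0)
          = ∑ j : Fin n, if (decide (j ∈ S) : Bool) = true then max (l j) 0 else 0 := by
        apply Finset.sum_congr rfl
        intro j _
        by_cases h : j ∈ S <;> simp [h, Finset.singleton_subset_iff]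
      rw [h1, h2, h3]; ring
    rw [himg]
end

section
/- Let f be a multilinear binary polynomial and let M be a finite exact set of overestimation matrices with respect to the signed support vector of pp(f). Then f is non-negative on {0,1}^n if and only if for every M ∈ M, the NNS polynomial nn(f) + M·pp(f) is non-negative on {0,1}^n. -/
/-- NNS component of a coefficient vector. -/
def nnPart {n : ℕ} (c : Finset (Fin n) → ℝ) : Finset (Fin n) → ℝ :=
  fun A => if A.card ≤ 1 then c A else min (c A) 0

/-- PS component of a coefficient vector. -/
def ppPart {n : ℕ} (c : Finset (Fin n) → ℝ) : Finset (Fin n) → ℝ :=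
  fun A => if A.card ≤ 1 then 0 else max (c A) 0

/-- `f` is non-negative on the binary cube iff every NNS polynomial
`nn(f) + M·pp(f)`, for `M` in a finite exact set of overestimation matrices
w.r.t. `pp(f)` (represented by the affine-linear coefficient vectors `L i`),
is non-negative on the binary cube. -/
theorem nonneg_iff_overestimators {n : ℕ} (c : Finset (Fin n) → ℝ)
    {ι : Type} [Fintype ι]
    (L : ι → (Finset (Fin n) → ℝ))
    (hlin : ∀ (i : ι) (A : Finset (Fin n)), 2 ≤ A.card → L i A = 0)
    (hover : ∀ (i : ι) (S : Finset (Fin n)),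
      evalPoly (ppPart c) S ≤ evalPoly (L i) S)
    (hexact : ∀ S : Finset (Fin n), ∃ i : ι,
      evalPoly (L i) S = evalPoly (ppPart c) S) :
    (∀ S : Finset (Fin n), 0 ≤ evalPoly c S) ↔
      (∀ (i : ι) (S : Finset (Fin n)),
        0 ≤ evalPoly (nnPart c) S + evalPoly (L i) S) := by
  have hsplit : ∀ S, evalPoly c S = evalPoly (nnPart c) S + evalPoly (ppPart c) S := by
    intro S
    unfold evalPoly
    rw [← Finset.sum_add_distrib]
    refine Finset.sum_congr rfl fun A _ => ?_
    by_cases h : A ⊆ S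
    · simp only [h, if_true, nnPart, ppPart]
      by_cases hc : A.card ≤ 1
      · simp [hc]
      · simp [hc, min_add_max]
    · simp [h]
  constructor
  · intro h i S
    have := hover i S
    have h2 := h S
    rw [hsplit S] at h2
    linarith
  · intro h S
    obtain ⟨i, hi⟩ := hexact S
    have := h i S
    rw [hi] at this
    rw [hsplit S]
    linarith
end

section
/- For a PS polynomial f with m nonlinear monomials of maximum degree d, the standard extension furnishes an exact set of linear overestimators of cardinality ∏_{α ∈ supp(f)} |α| ≤ d^m; hence the concave-extension complexity Γ of f is bounded by min(2^{n'}, d^m), where n' is the number of variables appearing in f. -/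
/-!
Each selector `σ`, choosing a variable `σ A ∈ A` for every monomial `A`, gives the linear function
`∑_A c_A x_{σ A}`, which dominates `f` on `{0,1}^n` because `c ≥ 0`, and is tight at `S` as soon as
every monomial not contained in `S` has its selected variable outside `S`. Such a selector exists for
every `S`; all selectors together form the standard extension (`∏ |A|` of them), while choosing one
selector per trace `S ∩ V` on the variables `V` that occur in `f` gives at most `2 ^ |V|` of them.
-/

open Finset

namespace Finset

variable {α : Type*}

theorem exists_mem_imp_subset (T : Finset α) {A : Finset α} (hA : A.Nonempty) :
    ∃ a ∈ A, a ∈ T → A ⊆ T := by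
  by_cases hAT : A ⊆ T
  · obtain ⟨a, ha⟩ := hA
    exact ⟨a, ha, fun _ => hAT⟩
  · obtain ⟨a, haA, haT⟩ := not_subset.mp hAT
    exact ⟨a, haA, fun h => absurd h haT⟩

end Finset

section Selector

variable {α : Type*} [DecidableEq α] {s : Finset (Finset α)} {c : Finset α → ℝ}

def selectorLinear (s : Finset (Finset α)) (c : Finset α → ℝ) (σ : ∀ A ∈ s, α) (j : α) : ℝ :=
  ∑ A ∈ s.attach, if σ A.1 A.2 = j then c A else 0

theorem sum_selectorLinear (σ : ∀ A ∈ s, α) (S : Finset α) :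
    ∑ j ∈ S, selectorLinear s c σ j = ∑ A ∈ s.attach, if σ A.1 A.2 ∈ S then c A else 0 := by
  simp only [selectorLinear]
  rw [sum_comm]
  exact sum_congr rfl fun A _ => sum_ite_eq S _ _

end Selector

section Overestimators

variable {n : ℕ} {c : Finset (Fin n) → ℝ} {s : Finset (Finset (Fin n))}

def IsExactOverestimatorSet (c : Finset (Fin n) → ℝ) (F : Finset (Fin n → ℝ)) : Prop :=
  (∀ ℓ ∈ F, ∀ S : Finset (Fin n), evalPoly c S ≤ ∑ j ∈ S, ℓ j) ∧
  (∀ S : Finset (Fin n), ∃ ℓ ∈ F, (∑ j ∈ S, ℓ j) = evalPoly c S)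

theorem evalPoly_eq_sum_attach (hsupp : ∀ A, c A ≠ 0 → A ∈ s) (S : Finset (Fin n)) :
    evalPoly c S = ∑ A ∈ s.attach, if A.1 ⊆ S then c A else 0 := by
  rw [sum_attach s fun A => if A ⊆ S then c A else 0, evalPoly]
  refine (sum_subset (subset_univ s) fun A _ hA => ?_).symm
  rw [not_imp_comm.mp (hsupp A) hA, ite_self]

theorem evalPoly_le_sum_selectorLinear (hc : ∀ A ∈ s, 0 ≤ c A) (hsupp : ∀ A, c A ≠ 0 → A ∈ s)
    {σ : ∀ A ∈ s, Fin n} (hσ : ∀ A hA, σ A hA ∈ A) (S : Finset (Fin n)) :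
    evalPoly c S ≤ ∑ j ∈ S, selectorLinear s c σ j := by
  rw [evalPoly_eq_sum_attach hsupp, sum_selectorLinear]
  refine sum_le_sum fun A _ => ?_
  by_cases hAS : A.1 ⊆ S
  · rw [if_pos hAS, if_pos (hAS (hσ A.1 A.2))]
  · rw [if_neg hAS]
    split_ifs
    exacts [hc A.1 A.2, le_rfl]

theorem sum_selectorLinear_eq_evalPoly (hsupp : ∀ A, c A ≠ 0 → A ∈ s)
    {σ : ∀ A ∈ s, Fin n} (hσ : ∀ A hA, σ A hA ∈ A) {S : Finset (Fin n)}
    (htight : ∀ A hA, σ A hA ∈ S → A ⊆ S) :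
    ∑ j ∈ S, selectorLinear s c σ j = evalPoly c S := by
  rw [evalPoly_eq_sum_attach hsupp, sum_selectorLinear]
  refine sum_congr rfl fun A _ => if_congr ?_ rfl rfl
  exact ⟨htight A.1 A.2, fun hAS => hAS (hσ A.1 A.2)⟩

theorem exists_isExactOverestimatorSet_card_le (hc : ∀ A ∈ s, 0 ≤ c A)
    (hsupp : ∀ A, c A ≠ 0 → A ∈ s) (Φ : Finset (∀ A ∈ s, Fin n))
    (hsel : ∀ σ ∈ Φ, ∀ A hA, σ A hA ∈ A)
    (htight : ∀ S, ∃ σ ∈ Φ, ∀ A hA, σ A hA ∈ S → A ⊆ S) :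
    ∃ F, IsExactOverestimatorSet c F ∧ F.card ≤ Φ.card := by
  classical
  refine ⟨Φ.image (selectorLinear s c), ⟨?_, fun S => ?_⟩, card_image_le⟩
  · rintro ℓ hℓ S
    obtain ⟨σ, hσ, rfl⟩ := mem_image.mp hℓ
    exact evalPoly_le_sum_selectorLinear hc hsupp (hsel σ hσ) S
  · obtain ⟨σ, hσ, hσS⟩ := htight S
    exact ⟨_, mem_image_of_mem _ hσ, sum_selectorLinear_eq_evalPoly hsupp (hsel σ hσ) hσS⟩

theorem exists_isExactOverestimatorSet_card_le_prod (hc : ∀ A ∈ s, 0 ≤ c A)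
    (hsupp : ∀ A, c A ≠ 0 → A ∈ s) (hne : ∀ A ∈ s, A.Nonempty) :
    ∃ F, IsExactOverestimatorSet c F ∧ F.card ≤ ∏ A ∈ s, A.card := by
  rw [← card_pi]
  refine exists_isExactOverestimatorSet_card_le hc hsupp _
    (fun σ hσ => mem_pi.mp hσ) fun S => ?_
  choose σ hσA hσS using fun A (hA : A ∈ s) => S.exists_mem_imp_subset (hne A hA)
  exact ⟨σ, mem_pi.mpr hσA, hσS⟩

theorem exists_isExactOverestimatorSet_card_le_two_pow (hc : ∀ A ∈ s, 0 ≤ c A)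
    (hsupp : ∀ A, c A ≠ 0 → A ∈ s) (hne : ∀ A ∈ s, A.Nonempty) :
    ∃ F, IsExactOverestimatorSet c F ∧ F.card ≤ 2 ^ (s.biUnion id).card := by
  classical
  set V := s.biUnion id
  have hAV : ∀ A ∈ s, A ⊆ V := fun A hA => subset_biUnion_of_mem id hA
  choose σ hσA hσT using
    fun (T : Finset (Fin n)) A (hA : A ∈ s) => T.exists_mem_imp_subset (hne A hA)
  -- the selector for the trace `S ∩ V` is tight at `S` because every monomial lies inside `V`
  have htight : ∀ S, ∃ τ ∈ V.powerset.image σ, ∀ A hA, τ A hA ∈ S → A ⊆ S := fun S =>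
    ⟨σ (S ∩ V), mem_image_of_mem _ (mem_powerset.mpr inter_subset_right), fun A hA hS =>
      (hσT _ A hA (mem_inter.mpr ⟨hS, hAV A hA (hσA _ A hA)⟩)).trans inter_subset_left⟩
  obtain ⟨F, hF, hcard⟩ := exists_isExactOverestimatorSet_card_le hc hsupp
    (V.powerset.image σ) (forall_mem_image.mpr fun T _ => hσA T) htight
  exact ⟨F, hF, hcard.trans (card_image_le.trans (card_powerset V).le)⟩

end Overestimators

/-- For a PS polynomial with `m` nonlinear monomials of maximum degree `d` on
`n'` variables, the standard extension provides an exact set of linear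
overestimators of cardinality `∏_{α ∈ supp} |α| ≤ d^m`, and the relaxed Lovász
extension one of cardinality at most `2^{n'}`; hence the concave-extension
complexity is at most `min (2^{n'}) (d^m)`. -/
theorem standard_extension_complexity {n : ℕ} (c : Finset (Fin n) → ℝ)
    (hc : ∀ A : Finset (Fin n), 0 ≤ c A)
    (hdeg : ∀ A : Finset (Fin n), c A ≠ 0 → 2 ≤ A.card) :
    let supp := Finset.univ.filter (fun A : Finset (Fin n) => c A ≠ 0)
    let m := supp.card
    let d := supp.sup Finset.card
    let n' := (supp.biUnion id).card
    let Exact : Finset (Fin n → ℝ) → Prop := fun F =>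
      (∀ ℓ ∈ F, ∀ S : Finset (Fin n), evalPoly c S ≤ ∑ j ∈ S, ℓ j) ∧
      (∀ S : Finset (Fin n), ∃ ℓ ∈ F, (∑ j ∈ S, ℓ j) = evalPoly c S)
    (∃ F : Finset (Fin n → ℝ), Exact F ∧ F.card ≤ ∏ A ∈ supp, A.card) ∧
    (∏ A ∈ supp, A.card ≤ d ^ m) ∧
    (∃ F : Finset (Fin n → ℝ), Exact F ∧ F.card ≤ 2 ^ n') := by
  intro supp m d n' Exact
  have hc' : ∀ A ∈ supp, 0 ≤ c A := fun A _ => hc A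
  have hsupp : ∀ A, c A ≠ 0 → A ∈ supp := fun A hA => mem_filter.mpr ⟨mem_univ A, hA⟩
  have hne : ∀ A ∈ supp, A.Nonempty := fun A hA =>
    card_pos.mp (by have := hdeg A (mem_filter.mp hA).2; omega)
  exact ⟨exists_isExactOverestimatorSet_card_le_prod hc' hsupp hne,
    prod_le_pow_card supp _ d fun A hA => le_sup hA,
    exists_isExactOverestimatorSet_card_le_two_pow hc' hsupp hne⟩
end
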